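/- Let λ ∈ ℂ, α ∈ ℝ, and let φ₋, φ₊ : ℝ → ℂ be continuous. Let M be the fundamental solution of the ZS system at (λ, (φ₋, φ₊)) and let N be the fundamental solution of the ZS system at (λ, (e^{iα}·φ₋, e^{-iα}·φ₊)). Then N(x) = R * M(x) * R⁻¹ for all x ∈ ℝ, where R = !![e^{iα/2}, 0; 0, e^{-iα/2}]. -/

import Mathlib

open Complex Matrix

/-- `M` is the fundamental solution of the Zakharov–Shabat system at `(lam, (p, q))`:
`M' = !![-i lam, i p; -i q, i lam] * M`, `M 0 = 1`. -/
def IsZSFund (lam : ℂ) (p q : ℝ → ℂ) (M : ℝ → Matrix (Fin 2) (Fin 2) ℂ) : Prop :=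
  M 0 = 1 ∧ ∀ (x : ℝ) (i j : Fin 2), HasDerivAt (fun t => M t i j)
    ((!![-I * lam, I * p x; -I * q x, I * lam] * M x) i j) x

/-!
Both `N` and `R M R⁻¹` solve the same Cauchy problem: conjugating the coefficient matrix by
`R = diag(e, e⁻¹)` multiplies its off-diagonal entries by `e²` and `e⁻²`, which is exactly the
rotation `φ ↦ (e^{iα} φ₋, e^{-iα} φ₊)` when `e = e^{iα/2}`. Fundamental solutions of a traceless
`2 × 2` system are unique: for `2 × 2` matrices the adjugate is linear and `adj A = -A` when
`tr A = 0`, so `(adj M)' = -(adj M) A` and `(adj M · P)' = 0` for any two solutions `M`, `P`;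
hence `adj M · P = 1` and `P = M`.
-/

section MatrixDeriv

variable {𝔸 : Type*} {l m n : Type*} [Fintype m]

def HasMatrixDerivAt [NormedRing 𝔸] [NormedAlgebra ℝ 𝔸]
    (M : ℝ → Matrix l n 𝔸) (M' : Matrix l n 𝔸) (x : ℝ) : Prop :=
  ∀ i j, HasDerivAt (fun t => M t i j) (M' i j) x

section NormedRing

variable [NormedRing 𝔸] [NormedAlgebra ℝ 𝔸]

theorem hasMatrixDerivAt_const (C : Matrix l n 𝔸) (x : ℝ) :
    HasMatrixDerivAt (fun _ => C) 0 x :=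
  fun i j => hasDerivAt_const x (C i j)

theorem HasMatrixDerivAt.mul {A : ℝ → Matrix l m 𝔸} {B : ℝ → Matrix m n 𝔸}
    {A' : Matrix l m 𝔸} {B' : Matrix m n 𝔸} {x : ℝ}
    (hA : HasMatrixDerivAt A A' x) (hB : HasMatrixDerivAt B B' x) :
    HasMatrixDerivAt (fun t => A t * B t) (A' * B x + A x * B') x := by
  intro i j
  simp only [Matrix.add_apply, Matrix.mul_apply, ← Finset.sum_add_distrib]
  exact HasDerivAt.fun_sum fun k _ => (hA i k).mul (hB k j)

theorem HasMatrixDerivAt.const_mul_mul_const {k : Type*} [Fintype k] {M : ℝ → Matrix m k 𝔸}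
    {M' : Matrix m k 𝔸} {x : ℝ} (hM : HasMatrixDerivAt M M' x) (B : Matrix l m 𝔸) (C : Matrix k n 𝔸) :
    HasMatrixDerivAt (fun t => B * M t * C) (B * M' * C) x := by
  simpa using ((hasMatrixDerivAt_const B x).mul hM).mul (hasMatrixDerivAt_const C x)

theorem eq_apply_zero_of_hasMatrixDerivAt_zero {M : ℝ → Matrix l n 𝔸}
    (hM : ∀ x, HasMatrixDerivAt M 0 x) (x : ℝ) : M x = M 0 := by
  ext i j
  exact is_const_of_deriv_eq_zero (fun t => (hM t i j).differentiableAt)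
    (fun t => (hM t i j).deriv) x 0

end NormedRing

variable [NormedCommRing 𝔸] [NormedAlgebra ℝ 𝔸]

theorem HasMatrixDerivAt.adjugate_fin_two {M : ℝ → Matrix (Fin 2) (Fin 2) 𝔸}
    {M' : Matrix (Fin 2) (Fin 2) 𝔸} {x : ℝ} (hM : HasMatrixDerivAt M M' x) :
    HasMatrixDerivAt (fun t => adjugate (M t)) (adjugate M') x := by
  simp only [HasMatrixDerivAt, Matrix.adjugate_fin_two]
  intro i j
  fin_cases i <;> fin_cases j
  exacts [hM 1 1, (hM 0 1).neg, (hM 1 0).neg, hM 0 0]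

theorem Matrix.adjugate_fin_two_of_trace_eq_zero {R : Type*} [CommRing R]
    {A : Matrix (Fin 2) (Fin 2) R} (hA : trace A = 0) : adjugate A = -A := by
  rw [Matrix.trace_fin_two] at hA
  ext i j
  fin_cases i <;> fin_cases j <;> simp [Matrix.adjugate_fin_two]
  exacts [eq_neg_of_add_eq_zero_right hA, eq_neg_of_add_eq_zero_left hA]

theorem adjugate_mul_eq_one_of_trace_eq_zero {A : ℝ → Matrix (Fin 2) (Fin 2) 𝔸}
    (hA : ∀ x, trace (A x) = 0) {M P : ℝ → Matrix (Fin 2) (Fin 2) 𝔸}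
    (hM : ∀ x, HasMatrixDerivAt M (A x * M x) x) (hP : ∀ x, HasMatrixDerivAt P (A x * P x) x)
    (hM0 : M 0 = 1) (hP0 : P 0 = 1) (x : ℝ) : adjugate (M x) * P x = 1 := by
  have hderiv : ∀ t, HasMatrixDerivAt (fun t => adjugate (M t) * P t) 0 t := by
    intro t
    convert (hM t).adjugate_fin_two.mul (hP t) using 1
    rw [Matrix.adjugate_mul_distrib, Matrix.adjugate_fin_two_of_trace_eq_zero (hA t)]
    noncomm_ring
  simpa [hM0, hP0] using eq_apply_zero_of_hasMatrixDerivAt_zero hderiv x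

theorem eq_of_hasMatrixDerivAt_of_trace_eq_zero {A : ℝ → Matrix (Fin 2) (Fin 2) 𝔸}
    (hA : ∀ x, trace (A x) = 0) {M P : ℝ → Matrix (Fin 2) (Fin 2) 𝔸}
    (hM : ∀ x, HasMatrixDerivAt M (A x * M x) x) (hP : ∀ x, HasMatrixDerivAt P (A x * P x) x)
    (hM0 : M 0 = 1) (hP0 : P 0 = 1) : P = M := by
  funext x
  have hleft := adjugate_mul_eq_one_of_trace_eq_zero hA hM hM hM0 hM0 x
  calc P x = M x * adjugate (M x) * P x := by rw [mul_eq_one_comm.mp hleft, one_mul]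
    _ = M x := by
      rw [Matrix.mul_assoc, adjugate_mul_eq_one_of_trace_eq_zero hA hM hP hM0 hP0, mul_one]

end MatrixDeriv

def zsCoeff (lam a b : ℂ) : Matrix (Fin 2) (Fin 2) ℂ := !![-I * lam, I * a; -I * b, I * lam]

theorem trace_zsCoeff (lam a b : ℂ) : trace (zsCoeff lam a b) = 0 := by
  simp [zsCoeff, Matrix.trace_fin_two]

theorem inv_diag_fin_two {e : ℂ} (he : e ≠ 0) :
    (!![e, 0; 0, e⁻¹] : Matrix (Fin 2) (Fin 2) ℂ)⁻¹ = !![e⁻¹, 0; 0, e] :=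
  Matrix.inv_eq_left_inv (by simp [he, Matrix.one_fin_two])

theorem diag_mul_zsCoeff_mul_inv {e : ℂ} (he : e ≠ 0) (lam a b : ℂ) :
    !![e, 0; 0, e⁻¹] * zsCoeff lam a b * (!![e, 0; 0, e⁻¹] : Matrix (Fin 2) (Fin 2) ℂ)⁻¹ =
      zsCoeff lam (e ^ 2 * a) ((e ^ 2)⁻¹ * b) := by
  rw [inv_diag_fin_two he]
  ext i j
  fin_cases i <;> fin_cases j <;> simp [zsCoeff] <;> field_simp

theorem isZSFund_iff {lam : ℂ} {p q : ℝ → ℂ} {M : ℝ → Matrix (Fin 2) (Fin 2) ℂ} :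
    IsZSFund lam p q M ↔ M 0 = 1 ∧ ∀ x, HasMatrixDerivAt M (zsCoeff lam (p x) (q x) * M x) x :=
  Iff.rfl

theorem IsZSFund.unique {lam : ℂ} {p q : ℝ → ℂ} {M P : ℝ → Matrix (Fin 2) (Fin 2) ℂ}
    (hM : IsZSFund lam p q M) (hP : IsZSFund lam p q P) : P = M :=
  eq_of_hasMatrixDerivAt_of_trace_eq_zero (fun _ => trace_zsCoeff ..) hM.2 hP.2 hM.1 hP.1

theorem IsZSFund.diag_conj {lam : ℂ} {p q : ℝ → ℂ} {M : ℝ → Matrix (Fin 2) (Fin 2) ℂ}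
    (hM : IsZSFund lam p q M) {e : ℂ} (he : e ≠ 0) :
    IsZSFund lam (fun x => e ^ 2 * p x) (fun x => (e ^ 2)⁻¹ * q x)
      (fun x => !![e, 0; 0, e⁻¹] * M x * (!![e, 0; 0, e⁻¹] : Matrix (Fin 2) (Fin 2) ℂ)⁻¹) := by
  set R : Matrix (Fin 2) (Fin 2) ℂ := !![e, 0; 0, e⁻¹]
  have hR : R⁻¹ * R = 1 := by rw [inv_diag_fin_two he]; simp [R, he, Matrix.one_fin_two]
  refine isZSFund_iff.2 ⟨?_, fun x => ?_⟩
  · rw [hM.1, Matrix.mul_one, mul_eq_one_comm.mp hR]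
  · have hcoeff : R * (zsCoeff lam (p x) (q x) * M x) * R⁻¹ =
        zsCoeff lam (e ^ 2 * p x) ((e ^ 2)⁻¹ * q x) * (R * M x * R⁻¹) :=
      calc R * (zsCoeff lam (p x) (q x) * M x) * R⁻¹
          = R * zsCoeff lam (p x) (q x) * R⁻¹ * (R * M x * R⁻¹) := by
            simp only [Matrix.mul_assoc]
            rw [← Matrix.mul_assoc R⁻¹ R, hR, Matrix.one_mul]
        _ = zsCoeff lam (e ^ 2 * p x) ((e ^ 2)⁻¹ * q x) * (R * M x * R⁻¹) :=
            congrArg (· * _) (diag_mul_zsCoeff_mul_inv he ..)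
    have hderiv := ((isZSFund_iff.1 hM).2 x).const_mul_mul_const R R⁻¹
    rw [hcoeff] at hderiv
    exact hderiv

theorem zs_fund_R_symmetry
    (lam : ℂ) (α : ℝ) (φm φp : ℝ → ℂ)
    (M N : ℝ → Matrix (Fin 2) (Fin 2) ℂ)
    (hM : IsZSFund lam φm φp M)
    (hN : IsZSFund lam (fun x => Complex.exp (I * α) * φm x)
                       (fun x => Complex.exp (-(I * α)) * φp x) N) :
    ∀ x : ℝ, N x =
      !![Complex.exp (I * α / 2), 0; 0, Complex.exp (-(I * α / 2))] * M x *
        (!![Complex.exp (I * α / 2), 0; 0, Complex.exp (-(I * α / 2))] :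
          Matrix (Fin 2) (Fin 2) ℂ)⁻¹ := by
  set e := Complex.exp (I * α / 2)
  have he_sq : Complex.exp (I * α) = e ^ 2 := by rw [← Complex.exp_nat_mul]; ring_nf
  have he_neg : Complex.exp (-(I * α / 2)) = e⁻¹ := Complex.exp_neg _
  have he_sq_neg : Complex.exp (-(I * α)) = (e ^ 2)⁻¹ := by rw [← he_sq, Complex.exp_neg]
  rw [he_sq, he_sq_neg] at hN
  rw [he_neg]
  exact congrFun ((hM.diag_conj (Complex.exp_ne_zero _)).unique hN)
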